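/- Let k' be a field with finite extension k'', let R' = k'[[t]] and R'' = k''[[t]]. Let M → N be a homomorphism of R'-modules whose induced map M_tor → N_tor has cokernel Q of finite dimension over k'. Then the cokernel of the induced map (M ⊗_{R'} R'')_tor → (N ⊗_{R'} R'')_tor is isomorphic to Q ⊗_{R'} R'', and its dimension over k'' equals dim_{k'} Q. -/

import Mathlib

/-!
Since `k''/k'` is finite, a `k'`-basis of `k''` is also a `k'⟦t⟧`-basis of `k''⟦t⟧`, so
`R'' = k''⟦t⟧` is free, hence flat, over `R' = k'⟦t⟧`. Every nonzero `s ∈ R''` divides a power of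
`t`, which lies in `R'`; together with flatness this shows that `(R'' ⊗ P)_tor` is the image of
the injection `R'' ⊗ P_tor → R'' ⊗ P`. As `R'' ⊗ -` is right exact, it carries the cokernel `Q` of
`M_tor → N_tor` to the cokernel of `(R'' ⊗ M)_tor → (R'' ⊗ N)_tor`.

For the dimension, `R'' ⊗ Q ≅ Q ^ [k'' : k']` as `R'`-modules, so the tower law
`dim_{k'} = [k'' : k'] · dim_{k''}` gives `dim_{k''} (R'' ⊗ Q) = dim_{k'} Q`.
-/

open scoped TensorProduct

/-- The cokernel of the map induced on torsion submodules by a linear map `f : M →ₗ[R] N`,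
realized as the quotient of `N_tor` by the image of `M_tor` under `f`. -/
abbrev torsionCoker (R : Type*) [CommRing R] {M N : Type*} [AddCommGroup M] [Module R M]
    [AddCommGroup N] [Module R N] (f : M →ₗ[R] N) : Type _ :=
  ↥(Submodule.torsion R N) ⧸
    ((Submodule.map f (Submodule.torsion R M)).comap (Submodule.torsion R N).subtype)

open scoped nonZeroDivisors
open Submodule

section TorsionBaseChange

variable {R S : Type*} [CommRing R] [CommRing S] [Algebra R S]
  {M N P : Type*} [AddCommGroup M] [Module R M] [AddCommGroup N] [Module R N]
  [AddCommGroup P] [Module R P]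

theorem Submodule.apply_mem_torsion (f : M →ₗ[R] N) {x : M} (hx : x ∈ torsion R M) :
    f x ∈ torsion R N := by
  obtain ⟨a, ha⟩ := (mem_torsion_iff x).mp hx
  exact (mem_torsion_iff _).mpr ⟨a, by rw [← LinearMap.map_smul_of_tower, ha, map_zero]⟩

def LinearMap.torsionMap (f : M →ₗ[R] N) : torsion R M →ₗ[R] torsion R N :=
  f.restrict fun _ => apply_mem_torsion f

theorem LinearMap.exact_torsionMap_mkQ (f : M →ₗ[R] N) :
    Function.Exact f.torsionMap (mkQ ((map f (torsion R M)).comap (torsion R N).subtype)) :=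
  LinearMap.exact_iff.mpr ((ker_mkQ _).trans (LinearMap.range_restrict _ _).symm)

theorem tmul_mem_torsion (hmap : R⁰ ≤ S⁰.comap (algebraMap R S)) (s : S) {p : P}
    (hp : p ∈ torsion R P) : s ⊗ₜ[R] p ∈ torsion S (S ⊗[R] P) := by
  obtain ⟨a, ha⟩ := (mem_torsion_iff p).mp hp
  refine (mem_torsion_iff _).mpr ⟨⟨algebraMap R S a, hmap a.2⟩, ?_⟩
  change algebraMap R S a • s ⊗ₜ[R] p = 0
  rw [algebraMap_smul, TensorProduct.smul_tmul', TensorProduct.smul_tmul, ← Submonoid.smul_def,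
    ha, TensorProduct.tmul_zero]

theorem mem_range_lTensor_torsion_of_smul_eq_zero [Module.Flat R S] {a : R} (ha : a ∈ R⁰)
    {x : S ⊗[R] P} (hx : a • x = 0) :
    x ∈ LinearMap.range ((torsion R P).subtype.lTensor S) := by
  have hexact := Module.Flat.lTensor_exact S
    (LinearMap.exact_subtype_ker_map (a • LinearMap.id (R := R) (M := P)))
  obtain ⟨y, rfl⟩ := (hexact x).mp (by simpa [LinearMap.lTensor_smul] using hx)
  have hle : LinearMap.ker (a • LinearMap.id (R := R) (M := P)) ≤ torsion R P :=
    fun p hp => (mem_torsion_iff p).mpr ⟨⟨a, ha⟩, hp⟩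
  refine ⟨(inclusion hle).lTensor S y, ?_⟩
  rw [← LinearMap.comp_apply, ← LinearMap.lTensor_comp]
  rfl

theorem range_baseChange_torsion_subtype [Module.Flat R S]
    (hmap : R⁰ ≤ S⁰.comap (algebraMap R S)) (hdvd : ∀ s ∈ S⁰, ∃ a ∈ R⁰, s ∣ algebraMap R S a) :
    LinearMap.range ((torsion R P).subtype.baseChange S) = torsion S (S ⊗[R] P) := by
  apply le_antisymm
  · rintro _ ⟨x, rfl⟩
    induction x using TensorProduct.induction_on with
    | zero => simp
    | tmul s p => exact tmul_mem_torsion hmap s p.2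
    | add x y hx hy => rw [map_add]; exact add_mem hx hy
  · intro x hx
    obtain ⟨⟨s, hs⟩, hsx⟩ := (mem_torsion_iff x).mp hx
    obtain ⟨a, ha, t, hst⟩ := hdvd s hs
    have hax : a • x = 0 := by
      rw [← algebraMap_smul S a x, hst, mul_comm, mul_smul]
      exact (congrArg (t • ·) hsx).trans (smul_zero t)
    obtain ⟨y, hy⟩ := mem_range_lTensor_torsion_of_smul_eq_zero ha hax
    exact ⟨y, by rw [LinearMap.baseChange_eq_ltensor, hy]⟩

variable (S P) in
noncomputable def torsionBaseChangeEquiv [Module.Flat R S]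
    (hmap : R⁰ ≤ S⁰.comap (algebraMap R S)) (hdvd : ∀ s ∈ S⁰, ∃ a ∈ R⁰, s ∣ algebraMap R S a) :
    S ⊗[R] torsion R P ≃ₗ[S] torsion S (S ⊗[R] P) :=
  (LinearEquiv.ofInjective _ (by
      rw [LinearMap.baseChange_eq_ltensor]
      exact Module.Flat.lTensor_preserves_injective_linearMap _ (injective_subtype _))).trans
    (LinearEquiv.ofEq _ _ (range_baseChange_torsion_subtype hmap hdvd))

theorem torsionBaseChangeEquiv_comp_baseChange_torsionMap [Module.Flat R S]
    (hmap : R⁰ ≤ S⁰.comap (algebraMap R S)) (hdvd : ∀ s ∈ S⁰, ∃ a ∈ R⁰, s ∣ algebraMap R S a)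
    (f : M →ₗ[R] N) :
    (torsionBaseChangeEquiv S N hmap hdvd).toLinearMap ∘ₗ f.torsionMap.baseChange S =
      (f.baseChange S).torsionMap ∘ₗ (torsionBaseChangeEquiv S M hmap hdvd).toLinearMap := by
  refine LinearMap.ext fun x => Subtype.ext ?_
  change (torsion R N).subtype.baseChange S (f.torsionMap.baseChange S x) =
    f.baseChange S ((torsion R M).subtype.baseChange S x)
  rw [← LinearMap.comp_apply, ← LinearMap.baseChange_comp, ← LinearMap.comp_apply,
    ← LinearMap.baseChange_comp]
  rfl

noncomputable def torsionCokerBaseChangeEquiv [Module.Flat R S]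
    (hmap : R⁰ ≤ S⁰.comap (algebraMap R S)) (hdvd : ∀ s ∈ S⁰, ∃ a ∈ R⁰, s ∣ algebraMap R S a)
    (f : M →ₗ[R] N) : torsionCoker S (f.baseChange S) ≃ₗ[S] S ⊗[R] torsionCoker R f :=
  have hexact : Function.Exact (f.torsionMap.baseChange S)
      ((mkQ ((map f (torsion R M)).comap (torsion R N).subtype)).baseChange S) := by
    rw [LinearMap.baseChange_eq_ltensor, LinearMap.baseChange_eq_ltensor]
    exact lTensor_exact S f.exact_torsionMap_mkQ (mkQ_surjective _)
  have hsurj : Function.Surjective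
      ((mkQ ((map f (torsion R M)).comap (torsion R N).subtype)).baseChange S) := by
    rw [LinearMap.baseChange_eq_ltensor]
    exact LinearMap.lTensor_surjective S (mkQ_surjective _)
  have hrange : map (torsionBaseChangeEquiv S N hmap hdvd)
      (LinearMap.range (f.torsionMap.baseChange S)) =
        LinearMap.range (f.baseChange S).torsionMap := by
    change map (torsionBaseChangeEquiv S N hmap hdvd).toLinearMap _ = _
    rw [← LinearMap.range_comp, torsionBaseChangeEquiv_comp_baseChange_torsionMap,
      LinearMap.range_comp_of_range_eq_top _ (LinearEquiv.range _)]
  (quotEquivOfEq _ _ (LinearMap.range_restrict _ _).symm).trans <|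
    (Quotient.equiv _ _ _ hrange).symm.trans (hexact.linearEquivOfSurjective hsurj)

end TorsionBaseChange

section RestrictScalars

variable {K R : Type*} [Field K] [CommRing R] [Algebra K R]
  {P P' : Type*} [AddCommGroup P] [Module R P] [AddCommGroup P'] [Module R P']

theorem finrank_restrictScalars_congr (e : P ≃ₗ[R] P') :
    Module.finrank K (RestrictScalars K R P) = Module.finrank K (RestrictScalars K R P') :=
  LinearEquiv.finrank_eq
    { (RestrictScalars.addEquiv K R P).trans
        (e.toAddEquiv.trans (RestrictScalars.addEquiv K R P').symm) with
      map_smul' := fun a x => e.map_smul (algebraMap K R a) x }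

theorem finrank_restrictScalars_pi {ι : Type*} [Fintype ι]
    [Module.Finite K (RestrictScalars K R P)] :
    Module.finrank K (RestrictScalars K R (ι → P)) =
      Fintype.card ι * Module.finrank K (RestrictScalars K R P) := by
  have : Module.Free K (RestrictScalars K R P) :=
    @Module.Free.of_divisionRing K _ _ _ (RestrictScalars.module K R P)
  change Module.finrank K (ι → RestrictScalars K R P) = _
  rw [Module.finrank_pi_fintype, Finset.sum_const, Finset.card_univ, smul_eq_mul]

theorem finrank_restrictScalars_tensor {S : Type*} [Nontrivial R] [CommRing S] [Algebra R S]
    [Module.Free R S] [Module.Finite R S] [Module.Finite K (RestrictScalars K R P)] :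
    Module.finrank K (RestrictScalars K R (S ⊗[R] P)) =
      Module.finrank R S * Module.finrank K (RestrictScalars K R P) := by
  rw [finrank_restrictScalars_congr
    ((TensorProduct.equivFinsuppOfBasisLeft (Module.finBasis R S)).trans
      (Finsupp.linearEquivFunOnFinite R P _)), finrank_restrictScalars_pi, Fintype.card_fin]

theorem finrank_restrictScalars_eq_finrank_mul {K' S V : Type*} [Field K'] [Algebra K K']
    [CommRing S] [Algebra R S] [Algebra K' S] [AddCommGroup V] [Module R V] [Module S V]
    [IsScalarTower R S V]
    (h : (algebraMap R S).comp (algebraMap K R) = (algebraMap K' S).comp (algebraMap K K')) :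
    Module.finrank K (RestrictScalars K R V) =
      Module.finrank K K' * Module.finrank K' (RestrictScalars K' S V) := by
  let _ : Module K (RestrictScalars K' S V) := Module.compHom _ (algebraMap K K')
  have : IsScalarTower K K' (RestrictScalars K' S V) := IsScalarTower.of_compHom K K' _
  have : Module.Free K' (RestrictScalars K' S V) :=
    @Module.Free.of_divisionRing K' _ _ _ (RestrictScalars.module K' S V)
  rw [Module.finrank_mul_finrank]
  refine LinearEquiv.finrank_eq
    { (RestrictScalars.addEquiv K R V).trans (RestrictScalars.addEquiv K' S V).symm with
      map_smul' := fun a x => ?_ }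
  change (RestrictScalars.addEquiv K' S V).symm (RestrictScalars.addEquiv K R V (a • x)) =
    algebraMap K K' a • (RestrictScalars.addEquiv K' S V).symm (RestrictScalars.addEquiv K R V x)
  rw [RestrictScalars.addEquiv_map_smul, ← algebraMap_smul S, ← RingHom.comp_apply, h,
    RingHom.comp_apply, RestrictScalars.addEquiv_symm_map_algebraMap_smul]

end RestrictScalars

namespace PowerSeries

section

variable {K K' : Type*} [CommRing K] [CommRing K'] [Algebra K K'] {ι : Type*} [Fintype ι]

theorem algebraMap_comp_algebraMap :
    (algebraMap K⟦X⟧ K'⟦X⟧).comp (algebraMap K K⟦X⟧) =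
      (algebraMap K' K'⟦X⟧).comp (algebraMap K K') := by
  ext a
  simp [algebraMap_apply'', map_C]

theorem coeff_sum_smul_C (g : ι → K⟦X⟧) (v : ι → K') (n : ℕ) :
    coeff n (∑ j, g j • C (v j) : K'⟦X⟧) = ∑ j, coeff n (g j) • v j := by
  simp [map_sum, Algebra.smul_def, algebraMap_apply'', coeff_mul_C, coeff_map]

theorem linearIndependent_C {v : ι → K'} (hv : LinearIndependent K v) :
    LinearIndependent K⟦X⟧ (fun j => C (v j) : ι → K'⟦X⟧) := by
  rw [Fintype.linearIndependent_iff] at hv ⊢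
  intro g hg j
  ext n
  have := congrArg (coeff n) hg
  rw [coeff_sum_smul_C, map_zero] at this
  simpa using hv (fun j => coeff n (g j)) this j

theorem span_C_eq_top {v : ι → K'} (hv : span K (Set.range v) = ⊤) :
    span K⟦X⟧ (Set.range fun j => (C (v j) : K'⟦X⟧)) = ⊤ := by
  refine eq_top_iff'.mpr fun s => (mem_span_range_iff_exists_fun _).mpr ?_
  have hcoeff (n : ℕ) := (mem_span_range_iff_exists_fun K).mp (hv ▸ mem_top (x := coeff n s))
  choose g hg using hcoeff
  exact ⟨fun j => mk fun n => g n j, by ext n; rw [coeff_sum_smul_C]; simp [hg]⟩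

noncomputable def _root_.Module.Basis.powerSeries (c : Module.Basis ι K K') :
    Module.Basis ι K⟦X⟧ K'⟦X⟧ :=
  .mk (linearIndependent_C c.linearIndependent) (span_C_eq_top c.span_eq).ge

end

variable {K K' : Type*} [Field K] [Field K'] [Algebra K K']

instance [FiniteDimensional K K'] : Module.Free K⟦X⟧ K'⟦X⟧ :=
  .of_basis (Module.finBasis K K').powerSeries

instance [FiniteDimensional K K'] : Module.Finite K⟦X⟧ K'⟦X⟧ :=
  .of_basis (Module.finBasis K K').powerSeries

theorem finrank_powerSeries [FiniteDimensional K K'] :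
    Module.finrank K⟦X⟧ K'⟦X⟧ = Module.finrank K K' := by
  rw [Module.finrank_eq_card_basis (Module.finBasis K K').powerSeries, Fintype.card_fin]

theorem nonZeroDivisors_le_comap_algebraMap :
    K⟦X⟧⁰ ≤ K'⟦X⟧⁰.comap (algebraMap K⟦X⟧ K'⟦X⟧) :=
  nonZeroDivisors_le_comap_nonZeroDivisors_of_injective _
    (map_injective _ (algebraMap K K').injective)

theorem exists_dvd_X_pow {s : K'⟦X⟧} (hs : s ≠ 0) : ∃ n : ℕ, s ∣ X ^ n := by
  obtain ⟨n, u, rfl⟩ := IsDiscreteValuationRing.eq_unit_mul_pow_irreducible hs X_irreducible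
  exact ⟨n, Units.mul_left_dvd.mpr dvd_rfl⟩

theorem exists_dvd_algebraMap {s : K'⟦X⟧} (hs : s ∈ K'⟦X⟧⁰) :
    ∃ a ∈ K⟦X⟧⁰, s ∣ algebraMap K⟦X⟧ K'⟦X⟧ a := by
  obtain ⟨n, hn⟩ := exists_dvd_X_pow (nonZeroDivisors.ne_zero hs)
  refine ⟨X ^ n, mem_nonZeroDivisors_of_ne_zero (pow_ne_zero n X_ne_zero), ?_⟩
  rwa [map_pow, algebraMap_apply'', map_X]

end PowerSeries

/-- for a finite extension `k''/k'`, with `R' = k'⟦t⟧` and `R'' = k''⟦t⟧`,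
and a map `M → N` of `R'`-modules whose induced map on torsion has cokernel `Q` of finite
dimension over `k'`, the cokernel of the induced map `(M ⊗ R'')_tor → (N ⊗ R'')_tor` is
isomorphic to `Q ⊗_{R'} R''` and has `k''`-dimension equal to `dim_{k'} Q`. -/
theorem torsionCoker_baseChange
    (K K' : Type*) [Field K] [Field K'] [Algebra K K'] [FiniteDimensional K K']
    (M N : Type*) [AddCommGroup M] [Module (PowerSeries K) M]
    [AddCommGroup N] [Module (PowerSeries K) N]
    (f : M →ₗ[PowerSeries K] N)
    [@FiniteDimensional K (RestrictScalars K (PowerSeries K) (torsionCoker (PowerSeries K) f)) _ _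
      (RestrictScalars.module K (PowerSeries K) (torsionCoker (PowerSeries K) f))] :
    Nonempty ((torsionCoker (PowerSeries K') (f.baseChange (PowerSeries K'))) ≃ₗ[PowerSeries K']
        (PowerSeries K' ⊗[PowerSeries K] torsionCoker (PowerSeries K) f)) ∧
    Module.finrank K' (RestrictScalars K' (PowerSeries K')
        (torsionCoker (PowerSeries K') (f.baseChange (PowerSeries K')))) =
      Module.finrank K (RestrictScalars K (PowerSeries K) (torsionCoker (PowerSeries K) f)) := by
  let e := torsionCokerBaseChangeEquiv
    (PowerSeries.nonZeroDivisors_le_comap_algebraMap (K := K) (K' := K'))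
    (fun _ hs => PowerSeries.exists_dvd_algebraMap hs) f
  refine ⟨⟨e⟩, Nat.eq_of_mul_eq_mul_left (Module.finrank_pos (R := K) (M := K')) ?_⟩
  -- instance synthesis does not see through the explicit `Module` argument of the hypothesis
  have : Module.Finite K (RestrictScalars K (PowerSeries K) (torsionCoker (PowerSeries K) f)) := by
    assumption
  rw [finrank_restrictScalars_congr e,
    ← finrank_restrictScalars_eq_finrank_mul PowerSeries.algebraMap_comp_algebraMap,
    finrank_restrictScalars_tensor, PowerSeries.finrank_powerSeries]
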